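/- arXiv:1902.01681 — 4 statements merged into one kernel-verified Lean document; each statement's English description precedes it below -/
import Mathlib

section
/- For all natural numbers n and i with n ≥ i, the identity 2·∑_{k≥0} 3^k (k+2i) C(3n−k+i−4, n−k−i−1) = (n−i)·C(3n+i−3, n−i) holds. -/
/-- Binomial coefficient `C(a, b)` for integers, with the convention that it is
zero when `b < 0` or `b > a`. -/
def intChoose (a b : ℤ) : ℤ :=
  if 0 ≤ b then (a.toNat.choose b.toNat : ℤ) else 0

lemma intChoose_neg {a b : ℤ} (hb : b < 0) : intChoose a b = 0 := by
  simp [intChoose, not_le.mpr hb]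

lemma intChoose_key {a b : ℤ} (ha : 0 ≤ a) :
    a * intChoose (a - 1) (b - 1) = b * intChoose a b := by
  rcases lt_trichotomy b 0 with hb | rfl | hb
  · rw [intChoose_neg hb, intChoose_neg (by omega : b - 1 < 0)]; ring
  · rw [intChoose_neg (by norm_num : (0:ℤ) - 1 < 0)]; ring
  · rw [intChoose, intChoose, if_pos (by omega : (0:ℤ) ≤ b - 1), if_pos hb.le]
    rcases eq_or_lt_of_le ha with rfl | ha'
    · have : (0:ℤ).toNat.choose b.toNat = 0 :=
        Nat.choose_eq_zero_of_lt (by simp; omega)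
      rw [this]; ring
    · obtain ⟨A, rfl⟩ : ∃ A : ℕ, a = (A : ℤ) + 1 := ⟨a.toNat - 1, by omega⟩
      obtain ⟨B, rfl⟩ : ∃ B : ℕ, b = (B : ℤ) + 1 := ⟨b.toNat - 1, by omega⟩
      have h1 : ((A : ℤ) + 1 - 1).toNat = A := by omega
      have h2 : ((B : ℤ) + 1 - 1).toNat = B := by omega
      have h3 : ((A : ℤ) + 1).toNat = A + 1 := by omega
      have h4 : ((B : ℤ) + 1).toNat = B + 1 := by omega
      rw [h1, h2, h3, h4]
      have hnat : (A + 1) * A.choose B = (B + 1) * ((A + 1).choose (B + 1)) := by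
        simpa [Nat.succ_eq_add_one, Nat.mul_comm] using Nat.add_one_mul_choose_eq A B
      exact_mod_cast hnat

theorem stmt_1 (n i : ℕ) (hni : i ≤ n) :
    2 * ∑ᶠ k : ℕ, (3 : ℤ) ^ k * (k + 2 * i) *
        intChoose (3 * n - k + i - 4) (n - k - i - 1) =
      (n - i) * intChoose (3 * n + i - 3) (n - i) := by
  obtain ⟨m, rfl⟩ : ∃ m, n = i + m := ⟨n - i, by omega⟩
  clear hni
  set N : ℤ := 3 * (i + m : ℕ) + i - 3 with hN
  have hN' : N = 3 * m + 4 * i - 3 := by push_cast [hN]; ring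
  set f : ℕ → ℤ := fun k => (3 : ℤ) ^ k * (k + 2 * i) *
      intChoose (3 * (i + m : ℕ) - k + i - 4) ((i + m : ℕ) - k - i - 1) with hf
  have hsupp : Function.support f ⊆ (Finset.range m : Set ℕ) := by
    intro k hk
    simp only [Function.mem_support, hf] at hk
    simp only [Finset.coe_range, Set.mem_Iio]
    by_contra h
    push_neg at h
    rw [intChoose_neg (by push_cast; omega)] at hk
    simp at hk
  rw [finsum_eq_sum_of_support_subset f hsupp]
  rcases Nat.eq_zero_or_pos m with rfl | hm
  · simp
  set G : ℕ → ℤ := fun k => 3 ^ k * (N - k) * intChoose (N - 1 - k) ((m : ℤ) - 1 - k) with hG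
  have hterm : ∀ k ∈ Finset.range m, 2 * f k = G k - G (k + 1) := by
    intro k hk
    simp only [Finset.mem_range] at hk
    have ha : (3 * ((i + m : ℕ) : ℤ) - k + i - 4) = N - 1 - k := by push_cast [hN]; ring
    have hb : (((i + m : ℕ) : ℤ) - k - i - 1) = (m : ℤ) - 1 - k := by push_cast; ring
    simp only [hf, hG, ha, hb]
    by_cases hcase : 0 ≤ N - 1 - k
    · have hkey := intChoose_key (b := (m : ℤ) - 1 - k) hcase
      have e1 : N - 1 - ((k : ℤ) + 1) = (N - 1 - (k:ℤ)) - 1 := by ring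
      have e2 : (m : ℤ) - 1 - ((k : ℤ) + 1) = ((m : ℤ) - 1 - (k:ℤ)) - 1 := by ring
      push_cast [e1, e2]
      have hc : (((i + m : ℕ)) : ℤ) = (i : ℤ) + m := by push_cast; ring
      linear_combination (3:ℤ) ^ (k + 1) * hkey -
        (3:ℤ) ^ (k + 1) * intChoose (N - 1 - (k:ℤ)) ((m:ℤ) - 1 - k) * hc
    · have h1 : m = 1 ∧ i = 0 ∧ k = 0 := by
        constructor <;> [skip; constructor] <;> omega
      obtain ⟨rfl, rfl, rfl⟩ := h1
      norm_num [hN', intChoose_neg]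
  rw [Finset.mul_sum, Finset.sum_congr rfl hterm, Finset.sum_range_sub']
  have hGm : G m = 0 := by
    simp only [hG]
    rw [intChoose_neg (by omega : (m:ℤ) - 1 - m < 0)]
    ring
  have hG0 : G 0 = N * intChoose (N - 1) ((m : ℤ) - 1) := by
    simp only [hG]; push_cast; ring_nf
  rw [hGm, hG0]
  have hNnn : (0:ℤ) ≤ N := by omega
  have := intChoose_key (b := (m : ℤ)) hNnn
  have harg2 : (((i + m : ℕ) : ℤ) - i) = m := by push_cast; ring
  rw [harg2]
  linarith [this]
end

section
/- If a formal power series t(x) over ℚ with t(0) = 0 satisfies t·(1−t)^2 = x, then the coefficient of x^{n+1} in t is (1/(n+1))·C(3n+1, n) for all n ≥ 0. -/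
/-!
Differentiating `X = t (1 - t)²` gives `t' u = 1` with `u = (1 - t)(1 - 3t)`, and differentiating
again `t'' u³ = 4 - 6t`. Hence `u³` times `(4X - 27X²) t'' + (2 - 27X) t' + 3t - 2` is a quadratic
in `X` vanishing at `X = t (1 - t)²`, and since `u` is a unit, `t` satisfies this hypergeometric
equation. Its coefficients give a two-term recurrence, which `C(3n+1, n)/(n+1)` satisfies as well.
-/

open PowerSeries

namespace PowerSeries

section
variable {R : Type*} [CommSemiring R]

theorem coeff_X_mul_derivative (f : R⟦X⟧) (n : ℕ) :
    coeff n (X * d⁄dX R f) = n * coeff n f := by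
  rcases n with _ | n
  · simp
  · rw [coeff_succ_X_mul, coeff_derivative]
    push_cast
    ring

end

section
variable {R : Type*} [CommRing R]

theorem coeff_X_sq_mul_derivative_derivative (f : R⟦X⟧) (n : ℕ) :
    coeff n (X ^ 2 * d⁄dX R (d⁄dX R f)) = n * (n - 1) * coeff n f := by
  rcases n with _ | n
  · simp
  · rw [sq, mul_assoc, coeff_succ_X_mul, coeff_X_mul_derivative, coeff_derivative]
    push_cast
    ring

theorem coeff_succ_succ_of_ode {f : R⟦X⟧}
    (hf : (4 * X - 27 * X ^ 2) * d⁄dX R (d⁄dX R f) + (2 - 27 * X) * d⁄dX R f + 3 * f - 2 = 0)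
    (n : ℕ) :
    2 * (n + 2) * (2 * n + 3) * coeff (n + 2) f = 3 * (3 * n + 2) * (3 * n + 4) * coeff (n + 1) f := by
  have hC : C 4 * (X * d⁄dX R (d⁄dX R f)) + C 2 * d⁄dX R f + C 3 * f
      = C 27 * (X ^ 2 * d⁄dX R (d⁄dX R f)) + C 27 * (X * d⁄dX R f) + C 2 := by
    simp only [map_ofNat]
    linear_combination hf
  have h := congrArg (coeff (n + 1)) hC
  simp only [map_add, coeff_C_mul, coeff_C, coeff_X_mul_derivative, coeff_derivative,
    coeff_X_sq_mul_derivative_derivative, Nat.add_one_ne_zero, if_false] at h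
  push_cast at h
  linear_combination h

end

end PowerSeries

section
variable {R : Type*} [CommRing R] {t : R⟦X⟧}

theorem derivative_mul_eq_one (ht : t * (1 - t) ^ 2 = X) :
    d⁄dX R t * ((1 - t) * (1 - 3 * t)) = 1 := by
  have h := congrArg (d⁄dX R) ht
  simp only [Derivation.leibniz, Derivation.leibniz_pow, map_sub, Derivation.map_one_eq_zero,
    derivative_X, smul_eq_mul, nsmul_eq_mul] at h
  linear_combination h

theorem derivative_derivative_mul_pow_three (ht : t * (1 - t) ^ 2 = X) :
    d⁄dX R (d⁄dX R t) * ((1 - t) * (1 - 3 * t)) ^ 3 = 4 - 6 * t := by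
  have h1 := derivative_mul_eq_one ht
  have h2 := congrArg (d⁄dX R) h1
  have h3 : d⁄dX R (3 : R⟦X⟧) = 0 := by
    rw [← map_ofNat C, derivative_C]
  simp only [Derivation.leibniz, map_sub, Derivation.map_one_eq_zero, h3, smul_eq_mul] at h2
  linear_combination ((1 - t) * (1 - 3 * t)) ^ 2 * h2
    + (4 - 6 * t) * (d⁄dX R t * ((1 - t) * (1 - 3 * t)) + 1) * h1

theorem isUnit_one_sub_mul_one_sub_three_mul (h0 : constantCoeff t = 0) :
    IsUnit ((1 - t) * (1 - 3 * t)) := by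
  rw [isUnit_iff_constantCoeff]
  simp [h0]

theorem hypergeometric_ode (h0 : constantCoeff t = 0) (ht : t * (1 - t) ^ 2 = X) :
    (4 * X - 27 * X ^ 2) * d⁄dX R (d⁄dX R t) + (2 - 27 * X) * d⁄dX R t + 3 * t - 2 = 0 := by
  set u := (1 - t) * (1 - 3 * t)
  have h1 := derivative_mul_eq_one ht
  have h2 := derivative_derivative_mul_pow_three ht
  refine ((isUnit_one_sub_mul_one_sub_three_mul h0).pow 3).mul_left_eq_zero.mp ?_
  linear_combination (4 * X - 27 * X ^ 2) * h2 + (2 - 27 * X) * u ^ 2 * h1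
    + (27 * (4 - 6 * t) * (X + t * (1 - t) ^ 2) - 4 * (4 - 6 * t) + 27 * u ^ 2) * ht

theorem coeff_one_eq_one (h0 : constantCoeff t = 0) (ht : t * (1 - t) ^ 2 = X) :
    coeff 1 t = 1 := by
  have h := congrArg constantCoeff (derivative_mul_eq_one ht)
  rw [map_mul, ← coeff_zero_eq_constantCoeff_apply, coeff_derivative] at h
  simpa [h0] using h

end

theorem choose_three_mul_add_four_recurrence (n : ℕ) :
    2 * (2 * n + 3) * (n + 1) * (3 * n + 4).choose (n + 1)
      = 3 * (3 * n + 2) * (3 * n + 4) * (3 * n + 1).choose n := by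
  have h1 := Nat.add_one_mul_choose_eq (3 * n + 3) n
  have h2 := Nat.choose_mul_succ_eq (3 * n + 2) n
  have h3 := Nat.choose_mul_succ_eq (3 * n + 1) n
  rw [show 3 * n + 2 + 1 - n = 2 * n + 3 by omega] at h2
  rw [show 3 * n + 1 + 1 - n = 2 * n + 2 by omega] at h3
  zify at h1 h2 h3 ⊢
  linear_combination (-2 * (2 * n + 3)) * h1 - 2 * (3 * n + 4) * h2 - 3 * (3 * n + 4) * h3

theorem stmt_6 (t : PowerSeries ℚ) (h0 : constantCoeff t = 0)
    (ht : t * (1 - t) ^ 2 = X) (n : ℕ) :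
    coeff (n + 1) t = (Nat.choose (3 * n + 1) n : ℚ) / (n + 1) := by
  have hrec := coeff_succ_succ_of_ode (hypergeometric_ode h0 ht)
  induction n with
  | zero => simp [coeff_one_eq_one h0 ht]
  | succ n ih =>
    have hchoose : (2 * (2 * n + 3) * (n + 1) * (3 * n + 4).choose (n + 1) : ℚ)
        = 3 * (3 * n + 2) * (3 * n + 4) * (3 * n + 1).choose n := by
      exact_mod_cast choose_three_mul_add_four_recurrence n
    have hne : (2 * (n + 2) * (2 * n + 3) : ℚ) ≠ 0 := by positivity
    rw [show 3 * (n + 1) + 1 = 3 * n + 4 by ring, ← mul_right_inj' hne]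
    push_cast
    rw [hrec n, ih]
    field_simp
    linear_combination -(n + 2 : ℚ) * hchoose
end

section
/- For all n ≥ 1: (2·C(3n+2, n−1) − 7·C(3n+1, n−2) + 3·C(3n, n−3)) / ((1/(2n+1))·C(3n, n)) = n(23n+17) / (2(2n+3)(n+1)). -/
lemma intChoose_natCast (a b : ℕ) : intChoose a b = (a.choose b : ℤ) := by
  simp [intChoose]

set_option maxHeartbeats 1000000 in
lemma key (m : ℕ) :
    (2 * (((3*m+11).choose (m+2) : ℚ)) - 7 * ((3*m+10).choose (m+1)) + 3 * ((3*m+9).choose m)) /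
      ((1 / (2*(m:ℚ)+7)) * ((3*m+9).choose (m+3))) =
    ((m:ℚ)+3) * (23*((m:ℚ)+3)+17) / (2 * (2*((m:ℚ)+3)+3) * (((m:ℚ)+3)+1)) := by
  have c1 := Nat.cast_choose ℚ (show m+2 ≤ 3*m+11 by omega)
  have c2 := Nat.cast_choose ℚ (show m+1 ≤ 3*m+10 by omega)
  have c3 := Nat.cast_choose ℚ (show m ≤ 3*m+9 by omega)
  have c4 := Nat.cast_choose ℚ (show m+3 ≤ 3*m+9 by omega)
  rw [show 3*m+11 - (m+2) = 2*m+9 by omega] at c1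
  rw [show 3*m+10 - (m+1) = 2*m+9 by omega] at c2
  rw [show 3*m+9 - m = 2*m+9 by omega] at c3
  rw [show 3*m+9 - (m+3) = 2*m+6 by omega] at c4
  have e1 : (((3*m+11).factorial : ℚ)) = (3*m+11)*(3*m+10)*((3*m+9).factorial) := by
    rw [show 3*m+11 = (3*m+10)+1 by omega, Nat.factorial_succ,
      show 3*m+10 = (3*m+9)+1 by omega, Nat.factorial_succ]
    push_cast; ring
  have e2 : (((3*m+10).factorial : ℚ)) = (3*m+10)*((3*m+9).factorial) := by
    rw [show 3*m+10 = (3*m+9)+1 by omega, Nat.factorial_succ]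
    push_cast; ring
  have e3 : (((m+3).factorial : ℚ)) = (m+3)*(m+2)*(m+1)*(m.factorial) := by
    rw [show m+3 = (m+2)+1 by omega, Nat.factorial_succ, Nat.factorial_succ, Nat.factorial_succ]
    push_cast; ring
  have e4 : (((m+2).factorial : ℚ)) = (m+2)*(m+1)*(m.factorial) := by
    rw [Nat.factorial_succ, Nat.factorial_succ]; push_cast; ring
  have e5 : (((m+1).factorial : ℚ)) = (m+1)*(m.factorial) := by
    rw [Nat.factorial_succ]; push_cast; ring
  have e6 : (((2*m+9).factorial : ℚ)) = (2*m+9)*(2*m+8)*(2*m+7)*((2*m+6).factorial) := by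
    rw [show 2*m+9 = (2*m+8)+1 by omega, Nat.factorial_succ,
      show 2*m+8 = (2*m+7)+1 by omega, Nat.factorial_succ,
      show 2*m+7 = (2*m+6)+1 by omega, Nat.factorial_succ]
    push_cast; ring
  rw [c1, c2, c3, c4, e1, e2, e3, e4, e5, e6]
  have hF : ((3*m+9).factorial : ℚ) ≠ 0 := by positivity
  have hM : ((m).factorial : ℚ) ≠ 0 := by positivity
  have hG : ((2*m+6).factorial : ℚ) ≠ 0 := by positivity
  have h1 : (m:ℚ)+1 ≠ 0 := by positivity
  have h2 : (m:ℚ)+2 ≠ 0 := by positivity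
  have h3 : (m:ℚ)+3 ≠ 0 := by positivity
  have h4 : 2*(m:ℚ)+7 ≠ 0 := by positivity
  have h5 : 2*(m:ℚ)+8 ≠ 0 := by positivity
  have h6 : 2*(m:ℚ)+9 ≠ 0 := by positivity
  set F := ((3*m+9).factorial : ℚ)
  set M := ((m).factorial : ℚ)
  set G := ((2*m+6).factorial : ℚ)
  field_simp
  ring

theorem stmt_8 (n : ℕ) (hn : 1 ≤ n) :
    ((2 * intChoose (3 * n + 2) (n - 1) - 7 * intChoose (3 * n + 1) (n - 2)
        + 3 * intChoose (3 * n) (n - 3) : ℤ) : ℚ) /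
        ((1 / (2 * n + 1)) * Nat.choose (3 * n) n) =
      n * (23 * n + 17) / (2 * (2 * n + 3) * (n + 1)) := by
  match n, hn with
  | 1, _ => norm_num [intChoose]
  | 2, _ => norm_num [intChoose, Nat.choose]
  | (m+3), _ =>
    have a1 : (3 * ((m:ℤ)+3) + 2) = ((3*m+11 : ℕ) : ℤ) := by push_cast; ring
    have a2 : (3 * ((m:ℤ)+3) + 1) = ((3*m+10 : ℕ) : ℤ) := by push_cast; ring
    have a3 : (3 * ((m:ℤ)+3)) = ((3*m+9 : ℕ) : ℤ) := by push_cast; ring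
    have b1 : (((m:ℤ)+3) - 1) = ((m+2 : ℕ) : ℤ) := by push_cast; ring
    have b2 : (((m:ℤ)+3) - 2) = ((m+1 : ℕ) : ℤ) := by push_cast; ring
    have b3 : (((m:ℤ)+3) - 3) = ((m : ℕ) : ℤ) := by push_cast; ring
    push_cast
    rw [a1, a2, a3, b1, b2, b3, intChoose_natCast, intChoose_natCast, intChoose_natCast,
      show 3*(m+3) = 3*m+9 by omega]
    push_cast
    have := key m
    convert this using 2 <;> push_cast <;> ring
end

section
/- As formal power series in x over ℚ with t defined implicitly by t(1−t)² = x and t(0)=0, the identity 2t²(1−2t)/((1−3t)³(1−t)) = (2/3)·(d/dx)(t³/(1−3t)) holds, and consequently the coefficient of x^n in 2t²(1−2t)/((1−3t)³(1−t)) equals n·C(3n−1, n−2) for all n ≥ 2. -/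
/-!
Write `a = (1 - t)⁻¹` and `b = (1 - 3t)⁻¹`. Differentiating `t (1 - t)² = x` gives `t' = a b`, and
`x = t (1 - t)²` gives `t = x a²`. The series `S_r = a^r b` then satisfy the first-order relation
`S_r' = 3 x S_{r+2}' + (r + 3) S_{r+2}`, i.e. `(n + 1) [xⁿ⁺¹] S_r = (3n + r + 3) [xⁿ] S_{r+2}`, which
is the recurrence of `C(3n + r, n)`; since all `S_r` have constant term `1`, `[xⁿ] S_r = C(3n + r, n)`.
Finally `t³ / (1 - 3t) = x³ S_6`, and the derivative identity is a direct computation with `t' = a b`.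
-/

open PowerSeries

variable {K : Type*} [Field K] {t : K⟦X⟧}

theorem inv_one_sub_mul_cancel (h0 : constantCoeff t = 0) : (1 - t)⁻¹ * (1 - t) = 1 :=
  PowerSeries.inv_mul_cancel _ (by simp [h0])

theorem inv_one_sub_three_mul_mul_cancel (h0 : constantCoeff t = 0) :
    (1 - 3 * t)⁻¹ * (1 - 3 * t) = 1 :=
  PowerSeries.inv_mul_cancel _ (by simp [h0])

theorem X_mul_inv_one_sub_sq (h0 : constantCoeff t = 0) (ht : t * (1 - t) ^ 2 = X) :
    X * (1 - t)⁻¹ ^ 2 = t := by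
  linear_combination t * ((1 - t)⁻¹ * (1 - t) + 1) * inv_one_sub_mul_cancel h0
    - (1 - t)⁻¹ ^ 2 * ht

theorem derivative_eq_inv_one_sub_mul_inv (h0 : constantCoeff t = 0)
    (ht : t * (1 - t) ^ 2 = X) : d⁄dX K t = (1 - t)⁻¹ * (1 - 3 * t)⁻¹ := by
  have hD : d⁄dX K t * ((1 - t) * (1 - 3 * t)) = 1 := by
    have h := congrArg (d⁄dX K) ht
    simp only [Derivation.leibniz, derivative_pow, map_sub, derivative_one, derivative_X,
      smul_eq_mul] at h
    linear_combination h
  linear_combination ((1 - t)⁻¹ * (1 - 3 * t)⁻¹) * hD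
    - d⁄dX K t * inv_one_sub_mul_cancel h0
    - d⁄dX K t * (1 - t)⁻¹ * (1 - t) * inv_one_sub_three_mul_mul_cancel h0

theorem derivative_inv_one_sub_pow (h0 : constantCoeff t = 0) (ht : t * (1 - t) ^ 2 = X)
    (r : ℕ) : d⁄dX K ((1 - t)⁻¹ ^ r) = r * (1 - t)⁻¹ ^ (r + 2) * (1 - 3 * t)⁻¹ := by
  cases r with
  | zero => simp
  | succ r =>
    rw [derivative_pow, derivative_inv', map_sub, derivative_one,
      derivative_eq_inv_one_sub_mul_inv h0 ht, Nat.add_sub_cancel]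
    ring

theorem derivative_inv_one_sub_three_mul (h0 : constantCoeff t = 0)
    (ht : t * (1 - t) ^ 2 = X) :
    d⁄dX K (1 - 3 * t)⁻¹ = 3 * (1 - t)⁻¹ * (1 - 3 * t)⁻¹ ^ 3 := by
  have h3 : d⁄dX K (3 : K⟦X⟧) = 0 := by
    rw [← map_ofNat C 3, derivative_C]
  rw [derivative_inv', map_sub, derivative_one, Derivation.leibniz, h3,
    derivative_eq_inv_one_sub_mul_inv h0 ht, smul_eq_mul, smul_zero]
  ring

noncomputable def ternarySeries (t : K⟦X⟧) (r : ℕ) : K⟦X⟧ := (1 - t)⁻¹ ^ r * (1 - 3 * t)⁻¹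

theorem constantCoeff_ternarySeries (h0 : constantCoeff t = 0) (r : ℕ) :
    constantCoeff (ternarySeries t r) = 1 := by
  simp [ternarySeries, h0]

theorem derivative_ternarySeries (h0 : constantCoeff t = 0) (ht : t * (1 - t) ^ 2 = X)
    (r : ℕ) :
    d⁄dX K (ternarySeries t r) = C (3 : K) * (X * d⁄dX K (ternarySeries t (r + 2)))
      + C ((r : K) + 3) * ternarySeries t (r + 2) := by
  set a := (1 - t)⁻¹
  set b := (1 - 3 * t)⁻¹
  have htb : 3 * t * b = b - 1 := by
    linear_combination -inv_one_sub_three_mul_mul_cancel h0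
  have hab : 2 * a * b = 3 * b - a := by
    linear_combination 3 * b * inv_one_sub_mul_cancel h0 - a * inv_one_sub_three_mul_mul_cancel h0
  simp only [ternarySeries, Derivation.leibniz, derivative_inv_one_sub_pow h0 ht,
    derivative_inv_one_sub_three_mul h0 ht, smul_eq_mul, map_add, map_natCast, map_ofNat]
  push_cast
  linear_combination
    (-(3 * (r + 2) * a ^ (r + 2) * b ^ 2 + 9 * a ^ (r + 1) * b ^ 3)) * X_mul_inv_one_sub_sq h0 ht
    - ((r + 2) * a ^ (r + 2) * b + 3 * a ^ (r + 1) * b ^ 2) * htb - a ^ (r + 1) * b * hab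

theorem coeff_ternarySeries [CharZero K] (h0 : constantCoeff t = 0)
    (ht : t * (1 - t) ^ 2 = X) (n r : ℕ) :
    coeff n (ternarySeries t r) = (3 * n + r).choose n := by
  induction n generalizing r with
  | zero => simpa using constantCoeff_ternarySeries h0 r
  | succ n ih =>
    have hX : coeff n (X * d⁄dX K (ternarySeries t (r + 2))) =
        (n * (3 * n + (r + 2)).choose n : K) := by
      cases n with
      | zero => simp
      | succ m => rw [coeff_succ_X_mul, coeff_derivative, ih]; push_cast; ring
    have hrec := congrArg (coeff n) (derivative_ternarySeries h0 ht r)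
    rw [coeff_derivative, map_add, coeff_C_mul, coeff_C_mul, ih, hX,
      show 3 * n + (r + 2) = 3 * n + r + 2 by ring] at hrec
    have hchoose : ((3 * n + r + 2 + 1 : ℕ) : K) * (3 * n + r + 2).choose n
        = (3 * n + r + 2 + 1).choose (n + 1) * (n + 1) := by
      exact_mod_cast Nat.add_one_mul_choose_eq (3 * n + r + 2) n
    rw [show 3 * (n + 1) + r = 3 * n + r + 2 + 1 by ring]
    apply mul_right_cancel₀ (Nat.cast_add_one_ne_zero (R := K) n)
    rw [hrec, ← hchoose]
    push_cast
    ring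

theorem pow_three_mul_inv_eq (h0 : constantCoeff t = 0) (ht : t * (1 - t) ^ 2 = X) :
    t ^ 3 * (1 - 3 * t)⁻¹ = X ^ 3 * ternarySeries t 6 :=
  calc t ^ 3 * (1 - 3 * t)⁻¹ = (X * (1 - t)⁻¹ ^ 2) ^ 3 * (1 - 3 * t)⁻¹ := by
        rw [X_mul_inv_one_sub_sq h0 ht]
    _ = X ^ 3 * ternarySeries t 6 := by rw [ternarySeries]; ring

theorem coeff_pow_three_mul_inv [CharZero K] (h0 : constantCoeff t = 0)
    (ht : t * (1 - t) ^ 2 = X) (m : ℕ) :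
    coeff (m + 3) (t ^ 3 * (1 - 3 * t)⁻¹) = ((3 * m + 6).choose m : K) := by
  rw [pow_three_mul_inv_eq h0 ht, coeff_X_pow_mul, coeff_ternarySeries h0 ht]

theorem mul_inv_eq_C_mul_derivative [CharZero K] (h0 : constantCoeff t = 0)
    (ht : t * (1 - t) ^ 2 = X) :
    2 * t ^ 2 * (1 - 2 * t) * ((1 - 3 * t) ^ 3 * (1 - t))⁻¹ =
      C (2 / 3 : K) * d⁄dX K (t ^ 3 * (1 - 3 * t)⁻¹) := by
  set a := (1 - t)⁻¹
  set b := (1 - 3 * t)⁻¹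
  have ha : a * (1 - t) = 1 := inv_one_sub_mul_cancel h0
  have hb : b * (1 - 3 * t) = 1 := inv_one_sub_three_mul_mul_cancel h0
  have hinv : ((1 - 3 * t) ^ 3 * (1 - t))⁻¹ = a * b ^ 3 := by
    rw [inv_eq_iff_mul_eq_one (by simp [h0])]
    linear_combination ((b * (1 - 3 * t)) ^ 2 + b * (1 - 3 * t) + 1) * (a * (1 - t)) * hb + ha
  have hC : C (2 / 3 : K) * 3 = 2 := by
    rw [← map_ofNat C 3, ← map_mul, ← map_ofNat C 2]
    norm_num
  rw [hinv, Derivation.leibniz, derivative_inv_one_sub_three_mul h0 ht, derivative_pow,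
    derivative_eq_inv_one_sub_mul_inv h0 ht, smul_eq_mul, smul_eq_mul]
  push_cast
  linear_combination 2 * t ^ 2 * a * b ^ 2 * hb - (t ^ 3 * a * b ^ 3 + t ^ 2 * a * b ^ 2) * hC

theorem stmt_19 (t : PowerSeries ℚ) (h0 : constantCoeff (R := ℚ) t = 0)
    (ht : t * (1 - t) ^ 2 = X) :
    2 * t ^ 2 * (1 - 2 * t) * ((1 - 3 * t) ^ 3 * (1 - t))⁻¹ =
        (PowerSeries.C (R := ℚ) (2 / 3)) * derivative ℚ (t ^ 3 * (1 - 3 * t)⁻¹) ∧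
      ∀ n : ℕ, 2 ≤ n →
        coeff (R := ℚ) n (2 * t ^ 2 * (1 - 2 * t) * ((1 - 3 * t) ^ 3 * (1 - t))⁻¹) =
          n * Nat.choose (3 * n - 1) (n - 2) := by
  have hderiv := mul_inv_eq_C_mul_derivative h0 ht
  refine ⟨hderiv, fun n hn => ?_⟩
  obtain ⟨m, rfl⟩ : ∃ m, n = m + 2 := ⟨n - 2, by omega⟩
  have hchoose : ((3 * m + 5).choose m * (3 * m + 6) : ℚ) =
      (3 * m + 6).choose m * (2 * m + 6) := by
    have h := Nat.choose_mul_succ_eq (3 * m + 5) m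
    rw [show 3 * m + 5 + 1 - m = 2 * m + 6 by omega] at h
    exact_mod_cast h
  rw [hderiv, coeff_C_mul, coeff_derivative, show m + 2 + 1 = m + 3 from rfl,
    coeff_pow_three_mul_inv h0 ht, show 3 * (m + 2) - 1 = 3 * m + 5 by omega,
    Nat.add_sub_cancel]
  push_cast
  linear_combination (-1 / 3 : ℚ) * hchoose
end
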